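/- Let x_{n,k} = 2^{-2^n} + k·4^{-2^n}, X = {0} ∪ ⋃_{n=1}^∞ ⋃_{k=0}^{n-1} {x_{n,k}} ⊂ ℝ, and let μ = Σ_{n=1}^∞ Σ_{k=0}^{n-1} (2^{-n}/n) δ_{x_{n,k}}, where δ_y denotes the point mass at y. Then μ is a finite Borel measure fully supported on X, and the pointwise Assouad dimension satisfies dim_A(μ,x) = 0 for every x ∈ X. -/

import Mathlib

open MeasureTheory Metric Set
open scoped NNReal ENNReal

/-- The pointwise Assouad dimension of a measure `μ` at a point `x`. -/
noncomputable def pwAssouadDim {X : Type*} [PseudoMetricSpace X] [MeasurableSpace X]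
    (μ : Measure X) (x : X) : ℝ≥0∞ :=
  sInf (ENNReal.ofReal '' {s : ℝ | 0 < s ∧ ∃ C : ℝ, 0 < C ∧ ∀ r R : ℝ, 0 < r → r < R →
    μ (closedBall x R) ≤ ENNReal.ofReal (C * (R / r) ^ s) * μ (closedBall x r)})

/-- The points `x_{n,k} = 2^{-2^n} + k·4^{-2^n}`. -/
noncomputable def xnk (n k : ℕ) : ℝ := (2 : ℝ)⁻¹ ^ (2 ^ n) + k * (4 : ℝ)⁻¹ ^ (2 ^ n)

/-- The set `X = {0} ∪ ⋃_{n=1}^∞ ⋃_{k=0}^{n-1} {x_{n,k}}`. -/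
def XLR : Set ℝ := {0} ∪ {y : ℝ | ∃ n : ℕ, 1 ≤ n ∧ ∃ k : ℕ, k < n ∧ y = xnk n k}

/-- The measure `μ = Σ_{n=1}^∞ Σ_{k=0}^{n-1} (2^{-n}/n) δ_{x_{n,k}}`. -/
noncomputable def muLR : Measure ℝ :=
  Measure.sum fun n : ℕ =>
    ∑ k ∈ Finset.range n, (((2 : ℝ≥0∞)⁻¹ ^ n) / (n : ℝ≥0∞)) • Measure.dirac (xnk n k)

/-! At an atom `x_{n,k}` every ball around the point has measure at least the mass of the atom,
so ball measures at that point are comparable at all scales. At `0`, the radii `2^{-2^n}` of the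
levels decay doubly exponentially while their masses `2^{-n}` decay only exponentially: for
`r < R` the ratio `μ(B(0,R)) / μ(B(0,r))` is at most a constant times `log (R / r)`, which is
eventually smaller than `(R / r)^s` for every `s > 0`. -/

section AssouadBound

variable {X : Type*} [PseudoMetricSpace X] [MeasurableSpace X]

def AssouadBound (μ : Measure X) (x : X) (s C : ℝ) : Prop :=
  ∀ r R : ℝ, 0 < r → r < R →
    μ (closedBall x R) ≤ ENNReal.ofReal (C * (R / r) ^ s) * μ (closedBall x r)

lemma pwAssouadDim_eq_zero_of_forall_exists_assouadBound {μ : Measure X} {x : X}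
    (h : ∀ s : ℝ, 0 < s → ∃ C, 0 < C ∧ AssouadBound μ x s C) : pwAssouadDim μ x = 0 := by
  refine le_antisymm (ENNReal.le_of_forall_pos_le_add fun ε hε _ => ?_) zero_le
  rw [zero_add, ← ENNReal.ofReal_coe_nnreal]
  exact sInf_le ⟨ε, ⟨hε, h ε hε⟩, rfl⟩

lemma pwAssouadDim_eq_zero_of_measure_singleton_ne_zero {μ : Measure X} [IsFiniteMeasure μ]
    {x : X} (hx : μ {x} ≠ 0) : pwAssouadDim μ x = 0 := by
  refine pwAssouadDim_eq_zero_of_forall_exists_assouadBound fun s hs => ?_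
  set c := μ univ / μ {x}
  have hc : c ≠ ⊤ := ENNReal.div_ne_top (measure_ne_top μ _) hx
  refine ⟨c.toReal + 1, by positivity, fun r R hr hrR => ?_⟩
  have hRr : 1 ≤ (R / r) ^ s := Real.one_le_rpow ((one_le_div hr).2 hrR.le) hs.le
  calc μ (closedBall x R) ≤ μ univ := measure_mono (subset_univ _)
    _ = c * μ {x} := (ENNReal.div_mul_cancel hx (measure_ne_top μ _)).symm
    _ ≤ ENNReal.ofReal ((c.toReal + 1) * (R / r) ^ s) * μ (closedBall x r) := by
        gcongr
        · exact (ENNReal.ofReal_toReal hc).ge.trans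
            (ENNReal.ofReal_le_ofReal (by nlinarith [c.toReal_nonneg]))
        · exact singleton_subset_iff.2 (mem_closedBall_self hr.le)

end AssouadBound

lemma exists_nat_le_add_mul_two_pow {s : ℝ} (hs : 0 < s) :
    ∃ K : ℕ, ∀ e : ℕ, (e : ℝ) ≤ K + s * 2 ^ e := by
  obtain ⟨K, hK⟩ := pow_unbounded_of_one_lt s⁻¹ one_lt_two
  have hsK : 1 ≤ s * 2 ^ K := ((inv_lt_iff_one_lt_mul₀' hs).1 hK).le
  refine ⟨K, fun e => ?_⟩
  rcases le_or_gt e K with he | he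
  · have : (e : ℝ) ≤ K := by exact_mod_cast he
    linarith [mul_pos hs (pow_pos two_pos e)]
  obtain ⟨j, rfl⟩ := Nat.exists_eq_add_of_le he.le
  have hj : (j : ℝ) ≤ 2 ^ j := by exact_mod_cast Nat.lt_two_pow_self.le
  calc ((K + j : ℕ) : ℝ) = K + j := by push_cast; ring
    _ ≤ K + s * 2 ^ K * 2 ^ j := by nlinarith [pow_pos (two_pos (α := ℝ)) j]
    _ = K + s * 2 ^ (K + j) := by ring

lemma exists_two_pow_le_mul_rpow {s : ℝ} (hs : 0 < s) :
    ∃ C : ℝ, 0 < C ∧ ∀ (e : ℕ) (ρ : ℝ), 2 ^ 2 ^ e ≤ 4 * ρ → (2 : ℝ) ^ (e + 2) ≤ C * ρ ^ s := by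
  obtain ⟨K, hK⟩ := exists_nat_le_add_mul_two_pow hs
  refine ⟨2 ^ ((K : ℝ) + 2 + 2 * s), by positivity, fun e ρ hρ => ?_⟩
  have hρ' : (2 : ℝ) ^ ((2 : ℝ) ^ e - 2) ≤ ρ := by
    have : (2 : ℝ) ^ ((2 : ℝ) ^ e) = 2 ^ 2 ^ e := by norm_cast
    rw [Real.rpow_sub two_pos, Real.rpow_two, this]
    linarith
  calc (2 : ℝ) ^ (e + 2) = 2 ^ ((e : ℝ) + 2) := by norm_cast
    _ ≤ 2 ^ ((K : ℝ) + 2 + 2 * s + ((2 : ℝ) ^ e - 2) * s) :=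
        Real.rpow_le_rpow_of_exponent_le one_le_two (by linarith [hK e])
    _ = 2 ^ ((K : ℝ) + 2 + 2 * s) * ((2 : ℝ) ^ ((2 : ℝ) ^ e - 2)) ^ s := by
        rw [Real.rpow_add two_pos, Real.rpow_mul zero_le_two]
    _ ≤ 2 ^ ((K : ℝ) + 2 + 2 * s) * ρ ^ s := by gcongr

namespace muLR

noncomputable def scale (n : ℕ) : ℝ := 2⁻¹ ^ 2 ^ n

lemma scale_pos (n : ℕ) : 0 < scale n := by unfold scale; positivity

lemma scale_add (m e : ℕ) : scale (m + e) = scale m ^ 2 ^ e := by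
  rw [scale, scale, ← pow_mul, ← pow_add]

lemma two_pow_two_pow_mul_scale_le (m e : ℕ) :
    2 ^ 2 ^ e * (2 * scale (m + e)) ≤ 4 * scale m := by
  have hm : scale m ≤ 2⁻¹ := by
    simpa [scale] using pow_le_pow_of_le_one (by norm_num : (0 : ℝ) ≤ 2⁻¹) (by norm_num)
      (Nat.one_le_two_pow (n := m))
  obtain ⟨j, hj⟩ := Nat.exists_eq_add_of_le (Nat.one_le_two_pow (n := e))
  have hmj : scale m ^ j ≤ 2⁻¹ ^ j := pow_le_pow_left₀ (scale_pos m).le hm j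
  calc (2 : ℝ) ^ 2 ^ e * (2 * scale (m + e)) = 4 * scale m * (2 ^ j * scale m ^ j) := by
        rw [scale_add, hj]; ring
    _ ≤ 4 * scale m * (2 ^ j * 2⁻¹ ^ j) := by have := scale_pos m; gcongr
    _ = 4 * scale m := by rw [← mul_pow]; norm_num

lemma exists_two_mul_scale_succ_le {r : ℝ} (hr : 0 < r) : ∃ n, 2 * scale (n + 1) ≤ r := by
  obtain ⟨n, hn⟩ := exists_pow_lt_of_lt_one (half_pos hr) (by norm_num : (2 : ℝ)⁻¹ < 1)
  refine ⟨n, ?_⟩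
  have : scale (n + 1) ≤ 2⁻¹ ^ n := pow_le_pow_of_le_one (by norm_num) (by norm_num)
    (Nat.lt_two_pow_self.le.trans (Nat.pow_le_pow_right two_pos n.le_succ))
  linarith

lemma xnk_mem_Icc {n k : ℕ} (hk : k ≤ n) : xnk n k ∈ Icc (scale n) (2 * scale n) := by
  have hxnk : xnk n k = scale n + k * scale n ^ 2 := by
    rw [xnk, scale, ← pow_mul, mul_comm (2 ^ n), pow_mul]; norm_num
  have hk' : (k : ℝ) * scale n ≤ 1 := by
    calc (k : ℝ) * scale n ≤ 2 ^ 2 ^ n * scale n := by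
          have := scale_pos n
          gcongr
          exact_mod_cast hk.trans (Nat.lt_two_pow_self.le.trans (Nat.lt_two_pow_self.le))
      _ = 1 := by rw [scale, ← mul_pow]; norm_num
  rw [hxnk]
  constructor <;> nlinarith [scale_pos n]

noncomputable def level (n : ℕ) : Measure ℝ :=
  ∑ k ∈ Finset.range n, (((2 : ℝ≥0∞)⁻¹ ^ n) / (n : ℝ≥0∞)) • Measure.dirac (xnk n k)

lemma level_apply (n : ℕ) (s : Set ℝ) :
    level n s = ∑ k ∈ Finset.range n, (2 : ℝ≥0∞)⁻¹ ^ n / n * s.indicator 1 (xnk n k) := by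
  simp only [level, Measure.finsetSum_apply, Measure.smul_apply, Measure.dirac_apply, smul_eq_mul]

lemma level_apply_le (n : ℕ) (s : Set ℝ) : level n s ≤ (2 : ℝ≥0∞)⁻¹ ^ n :=
  calc level n s ≤ ∑ _k ∈ Finset.range n, (2 : ℝ≥0∞)⁻¹ ^ n / n * 1 := by
        rw [level_apply]
        gcongr
        exact indicator_apply_le fun _ => le_rfl
    _ ≤ (2 : ℝ≥0∞)⁻¹ ^ n := by simpa using ENNReal.mul_div_le

lemma level_apply_of_forall_mem {n : ℕ} (hn : n ≠ 0) {s : Set ℝ} (h : ∀ k < n, xnk n k ∈ s) :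
    level n s = (2 : ℝ≥0∞)⁻¹ ^ n := by
  rw [level_apply, Finset.sum_congr rfl fun k hk => by
    rw [indicator_of_mem (h k (Finset.mem_range.1 hk)), Pi.one_apply, mul_one]]
  simpa using ENNReal.mul_div_cancel (Nat.cast_ne_zero.2 hn) (ENNReal.natCast_ne_top n)

lemma level_apply_of_forall_notMem {n : ℕ} {s : Set ℝ} (h : ∀ k < n, xnk n k ∉ s) :
    level n s = 0 := by
  rw [level_apply]
  exact Finset.sum_eq_zero fun k hk => by
    rw [indicator_of_notMem (h k (Finset.mem_range.1 hk)), mul_zero]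

lemma level_singleton_ne_zero {n k : ℕ} (hk : k < n) : level n {xnk n k} ≠ 0 := by
  rw [level_apply]
  exact fun h => by simpa using Finset.sum_eq_zero_iff.1 h k (Finset.mem_range.2 hk)

end muLR

open muLR

lemma muLR_eq_sum_level : muLR = Measure.sum level := rfl

lemma muLR_apply_le_two (s : Set ℝ) : muLR s ≤ 2 := by
  rw [muLR_eq_sum_level, Measure.sum_apply_of_countable]
  calc ∑' n, level n s ≤ ∑' n : ℕ, (2 : ℝ≥0∞)⁻¹ ^ n :=
        ENNReal.tsum_le_tsum fun n => level_apply_le n s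
    _ = 2 := by rw [ENNReal.tsum_geometric, ENNReal.one_sub_inv_two, inv_inv]

instance : IsFiniteMeasure muLR := ⟨(muLR_apply_le_two univ).trans_lt ENNReal.ofNat_lt_top⟩

lemma level_le_muLR (n : ℕ) : level n ≤ muLR := Measure.le_sum level n

lemma muLR_singleton_xnk_ne_zero {n k : ℕ} (hk : k < n) : muLR {xnk n k} ≠ 0 :=
  fun h => level_singleton_ne_zero hk (nonpos_iff_eq_zero.1 (h ▸ level_le_muLR n _))

lemma muLR_compl_XLR : muLR XLRᶜ = 0 :=
  Measure.sum_apply_eq_zero.2 fun n =>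
    level_apply_of_forall_notMem fun k hk hx => hx (Or.inr ⟨n, by omega, k, hk, rfl⟩)

lemma half_pow_le_muLR_closedBall_zero {n : ℕ} (hn : n ≠ 0) {r : ℝ} (hr : 2 * scale n ≤ r) :
    (2 : ℝ≥0∞)⁻¹ ^ n ≤ muLR (closedBall 0 r) := by
  rw [← level_apply_of_forall_mem hn fun k hk => ?_]
  · exact level_le_muLR n _
  have hx := xnk_mem_Icc hk.le
  rw [mem_closedBall_zero_iff, Real.norm_eq_abs, abs_of_pos (by linarith [scale_pos n, hx.1])]
  exact hx.2.trans hr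

lemma muLR_closedBall_zero_le {m : ℕ} {R : ℝ} (hR : ∀ j < m, R < scale j) :
    muLR (closedBall 0 R) ≤ 2 * (2 : ℝ≥0∞)⁻¹ ^ m := by
  have hsmall : ∀ j < m, level j (closedBall 0 R) = 0 := fun j hj =>
    level_apply_of_forall_notMem fun k hk hx => (hR j hj).not_ge <|
      (xnk_mem_Icc hk.le).1.trans ((le_abs_self _).trans (by simpa using hx))
  rw [muLR_eq_sum_level, Measure.sum_apply_of_countable,
    ← ENNReal.summable.sum_add_tsum_nat_add' (k := m),
    Finset.sum_eq_zero fun j hj => hsmall j (Finset.mem_range.1 hj), zero_add]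
  calc ∑' j, level (j + m) (closedBall 0 R) ≤ ∑' j : ℕ, (2 : ℝ≥0∞)⁻¹ ^ (j + m) :=
        ENNReal.tsum_le_tsum fun j => level_apply_le _ _
    _ = 2 * (2 : ℝ≥0∞)⁻¹ ^ m := by
        simp only [pow_add, ENNReal.tsum_mul_right, ENNReal.tsum_geometric, ENNReal.one_sub_inv_two,
          inv_inv]

lemma two_mul_inv_two_pow_le {M N : ℕ} (h : M ≤ N + 1) :
    2 * (2 : ℝ≥0∞)⁻¹ ^ M ≤ 2 ^ (N - M + 2) * 2⁻¹ ^ (N + 1) := by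
  obtain ⟨d, hd⟩ := Nat.exists_eq_add_of_le h
  have hcancel : (2 : ℝ≥0∞) ^ d * 2⁻¹ ^ d = 1 := by
    rw [← mul_pow, ENNReal.mul_inv_cancel two_ne_zero ENNReal.ofNat_ne_top, one_pow]
  calc 2 * (2 : ℝ≥0∞)⁻¹ ^ M = 2 * 2⁻¹ ^ M * (2 ^ d * 2⁻¹ ^ d) := by rw [hcancel, mul_one]
    _ = 2 ^ (d + 1) * 2⁻¹ ^ (N + 1) := by rw [hd, pow_add, pow_succ]; ring
    _ ≤ 2 ^ (N - M + 2) * 2⁻¹ ^ (N + 1) := by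
        gcongr ?_ * _
        exact pow_le_pow_right₀ one_le_two (by omega)

lemma exists_assouadBound_muLR_zero {s : ℝ} (hs : 0 < s) :
    ∃ C, 0 < C ∧ AssouadBound muLR 0 s C := by
  classical
  obtain ⟨C, hC, hCe⟩ := exists_two_pow_le_mul_rpow hs
  refine ⟨C, hC, fun r R hr hrR => ?_⟩
  -- `N + 1` is the first level inside `B(0, r)` and `M` the first level that can meet `B(0, R)`.
  have hN : ∃ N, 2 * scale (N + 1) ≤ r := exists_two_mul_scale_succ_le hr
  have hM : ∃ M, scale M ≤ R := ⟨_, by linarith [Nat.find_spec hN, scale_pos (Nat.find hN + 1)]⟩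
  set N := Nat.find hN
  set M := Nat.find hM
  have hMN : M ≤ N + 1 := Nat.find_min' hM (by linarith [Nat.find_spec hN, scale_pos (N + 1)])
  have hratio : (2 : ℝ) ^ 2 ^ (N - M) ≤ 4 * (R / r) := by
    obtain he | he := (N - M).eq_zero_or_pos
    · rw [he]
      linarith [(one_le_div hr).2 hrR.le]
    have hrN : r < 2 * scale N := by
      have := Nat.find_min hN (Nat.sub_one_lt (by omega : N ≠ 0))
      rwa [Nat.sub_add_cancel (by omega), not_le] at this
    have hscale := two_pow_two_pow_mul_scale_le M (N - M)
    rw [Nat.add_sub_cancel' (by omega)] at hscale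
    rw [mul_div_assoc', le_div_iff₀ hr]
    calc 2 ^ 2 ^ (N - M) * r ≤ 2 ^ 2 ^ (N - M) * (2 * scale N) := by gcongr
      _ ≤ 4 * scale M := hscale
      _ ≤ 4 * R := by linarith [Nat.find_spec hM]
  calc muLR (closedBall 0 R) ≤ 2 * 2⁻¹ ^ M :=
        muLR_closedBall_zero_le fun j hj => lt_of_not_ge (Nat.find_min hM hj)
    _ ≤ 2 ^ (N - M + 2) * 2⁻¹ ^ (N + 1) := two_mul_inv_two_pow_le hMN
    _ = ENNReal.ofReal (2 ^ (N - M + 2)) * 2⁻¹ ^ (N + 1) := by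
        rw [ENNReal.ofReal_pow zero_le_two, ENNReal.ofReal_ofNat]
    _ ≤ ENNReal.ofReal (C * (R / r) ^ s) * muLR (closedBall 0 r) := by
        gcongr
        · exact hCe _ _ hratio
        · exact half_pow_le_muLR_closedBall_zero N.succ_ne_zero (Nat.find_spec hN)

/-- `μ` is a finite Borel measure fully supported on `X`, and its pointwise
Assouad dimension is `0` at every point of `X`. -/
theorem muLR_pwAssouadDim_eq_zero :
    IsFiniteMeasure muLR ∧
    (∀ x ∈ XLR, ∀ r : ℝ, 0 < r → 0 < muLR (closedBall x r)) ∧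
    muLR XLRᶜ = 0 ∧
    (∀ x ∈ XLR, pwAssouadDim muLR x = 0) := by
  refine ⟨inferInstance, ?_, muLR_compl_XLR, ?_⟩
  · rintro x (rfl | ⟨n, -, k, hk, rfl⟩) r hr
    · obtain ⟨n, hn⟩ := exists_two_mul_scale_succ_le hr
      exact (ENNReal.pow_pos (by simp) _).trans_le
        (half_pow_le_muLR_closedBall_zero n.succ_ne_zero hn)
    · exact pos_iff_ne_zero.2 fun h => muLR_singleton_xnk_ne_zero hk <|
        measure_mono_null (singleton_subset_iff.2 (mem_closedBall_self hr.le)) h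
  · rintro x (rfl | ⟨n, -, k, hk, rfl⟩)
    · exact pwAssouadDim_eq_zero_of_forall_exists_assouadBound fun s hs =>
        exists_assouadBound_muLR_zero hs
    · exact pwAssouadDim_eq_zero_of_measure_singleton_ne_zero (muLR_singleton_xnk_ne_zero hk)
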